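/- Fix integers m ≥ 2, 1 ≤ t ≤ m−1 and a real number c > 0. Let γ be a 2-Frenet curve in the de Sitter space form S^m_t(c), with smooth positive curvature function k : I → ℝ and signs (ε₁,ε₂) ∈ {−1,1}². If γ is triharmonic, i.e. τ₃(γ) = ∇⁵T + R(∇³T,T)T − R(∇²T,∇T)T ≡ 0, then k is a constant function. -/

import Mathlib

open scoped BigOperators

noncomputable section

/-- The pseudo-Euclidean bilinear form of index `t` on `ℝⁿ` (modelled as `Fin n → ℝ`):
`⟪x,y⟫_t = −∑_{i<t} x_i y_i + ∑_{i≥t} x_i y_i`. -/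
def pform (t : ℕ) {n : ℕ} (x y : Fin n → ℝ) : ℝ :=
  ∑ i : Fin n, (if i.val < t then -(x i * y i) else x i * y i)

/-- The covariant derivative along `γ` induced on the quadric `⟪x,x⟫_t = 1/c`:
`∇X = X′ − c⟪X′,γ⟫_t γ`. -/
def cov (t : ℕ) {n : ℕ} (c : ℝ) (γ X : ℝ → Fin n → ℝ) : ℝ → Fin n → ℝ :=
  fun s => deriv X s - (c * pform t (deriv X s) (γ s)) • γ s

/-- The curvature operator of the space form: `R(X,Y)Z = c(⟪Y,Z⟫_t X − ⟪X,Z⟫_t Y)`. -/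
def curvOp (t : ℕ) {n : ℕ} (c : ℝ) (X Y Z : Fin n → ℝ) : Fin n → ℝ :=
  c • (pform t Y Z • X - pform t X Z • Y)

/-- The `r`-tension field of a curve `γ` in the space form:
`τ_r(γ) = ∇^{2r−1}T + ∑_{ℓ=0}^{r−2} (−1)^ℓ R(∇^{2r−3−ℓ}T, ∇^ℓT)T` with `T = γ′`. -/
def tensionField (t : ℕ) {n : ℕ} (c : ℝ) (r : ℕ) (γ : ℝ → Fin n → ℝ) (s : ℝ) : Fin n → ℝ :=
  (cov t c γ)^[2*r-1] (deriv γ) s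
    + ∑ ℓ ∈ Finset.range (r-1), ((-1 : ℝ)^ℓ) •
        curvOp t c ((cov t c γ)^[2*r-3-ℓ] (deriv γ) s) ((cov t c γ)^[ℓ] (deriv γ) s) (deriv γ s)

lemma pform_comm {t n : ℕ} (x y : Fin n → ℝ) : pform t x y = pform t y x := by
  unfold pform
  refine Finset.sum_congr rfl fun i _ => ?_
  by_cases h : (i : ℕ) < t <;> simp [h, mul_comm]

lemma pform_add_left {t n : ℕ} (x y z : Fin n → ℝ) :
    pform t (x + y) z = pform t x z + pform t y z := by
  unfold pform
  rw [← Finset.sum_add_distrib]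
  refine Finset.sum_congr rfl fun i _ => ?_
  by_cases h : (i : ℕ) < t <;> simp [h] <;> ring

lemma pform_sub_left {t n : ℕ} (x y z : Fin n → ℝ) :
    pform t (x - y) z = pform t x z - pform t y z := by
  unfold pform
  rw [← Finset.sum_sub_distrib]
  refine Finset.sum_congr rfl fun i _ => ?_
  by_cases h : (i : ℕ) < t <;> simp [h] <;> ring

lemma pform_neg_left {t n : ℕ} (x y : Fin n → ℝ) :
    pform t (-x) y = -pform t x y := by
  unfold pform
  rw [← Finset.sum_neg_distrib]
  refine Finset.sum_congr rfl fun i _ => ?_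
  by_cases h : (i : ℕ) < t <;> simp [h] <;> ring

lemma pform_smul_left {t n : ℕ} (a : ℝ) (x y : Fin n → ℝ) :
    pform t (a • x) y = a * pform t x y := by
  unfold pform
  rw [Finset.mul_sum]
  refine Finset.sum_congr rfl fun i _ => ?_
  by_cases h : (i : ℕ) < t <;> simp [h] <;> ring

lemma pform_zero_left {t n : ℕ} (y : Fin n → ℝ) : pform t 0 y = 0 := by
  unfold pform
  refine Finset.sum_eq_zero fun i _ => ?_
  by_cases h : (i : ℕ) < t <;> simp [h]

lemma hasDerivAt_pform {t n : ℕ} {u v : ℝ → Fin n → ℝ} {u' v' : Fin n → ℝ} {s : ℝ}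
    (hu : HasDerivAt u u' s) (hv : HasDerivAt v v' s) :
    HasDerivAt (fun y => pform t (u y) (v y)) (pform t u' (v s) + pform t (u s) v') s := by
  have hu' := hasDerivAt_pi.1 hu
  have hv' := hasDerivAt_pi.1 hv
  have key : ∀ i : Fin n, HasDerivAt
      (fun y => if (i : ℕ) < t then -(u y i * v y i) else u y i * v y i)
      (if (i : ℕ) < t then -(u' i * v s i + u s i * v' i) else u' i * v s i + u s i * v' i) s := by
    intro i
    by_cases h : (i : ℕ) < t <;> simp only [h, if_true, if_false]
    · exact ((hu' i).mul (hv' i)).neg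
    · exact (hu' i).mul (hv' i)
  unfold pform
  have hco : (∑ i : Fin n, (if (i : ℕ) < t then -(u' i * v s i) else u' i * v s i))
      + (∑ i : Fin n, (if (i : ℕ) < t then -(u s i * v' i) else u s i * v' i))
      = ∑ i : Fin n, (if (i : ℕ) < t then -(u' i * v s i + u s i * v' i)
          else u' i * v s i + u s i * v' i) := by
    rw [← Finset.sum_add_distrib]
    refine Finset.sum_congr rfl fun i _ => ?_
    by_cases h : (i : ℕ) < t <;> simp [h] <;> ring
  rw [hco]
  exact HasDerivAt.fun_sum (fun i _ => key i)

lemma hasDerivAt_of_contDiffOn {E : Type*} [NormedAddCommGroup E] [NormedSpace ℝ E]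
    {I : Set ℝ} (hI : IsOpen I) {f : ℝ → E} (hf : ContDiffOn ℝ (⊤ : ℕ∞) f I) {s : ℝ} (hs : s ∈ I) :
    HasDerivAt f (deriv f s) s :=
  (((hf s hs).differentiableWithinAt (by simp)).differentiableAt (hI.mem_nhds hs)).hasDerivAt

lemma contDiffOn_deriv_top {E : Type*} [NormedAddCommGroup E] [NormedSpace ℝ E]
    {I : Set ℝ} (hI : IsOpen I) {f : ℝ → E} (hf : ContDiffOn ℝ (⊤ : ℕ∞) f I) :
    ContDiffOn ℝ (⊤ : ℕ∞) (deriv f) I := hf.deriv_of_isOpen hI (by simp)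

lemma hasDerivAt_fix {f : ℝ → ℝ} {d d' : ℝ} {s : ℝ} (h : HasDerivAt f d s) (hd : d' = d) :
    HasDerivAt f d' s := hd ▸ h

lemma constOn {I : Set ℝ} (hIopen : IsOpen I) (hIconn : I.OrdConnected)
    (f : ℝ → ℝ) (hf : ∀ s ∈ I, HasDerivAt f 0 s) {x y : ℝ} (hx : x ∈ I) (hy : y ∈ I) :
    f x = f y := by
  have hconv : Convex ℝ I := convex_iff_ordConnected.mpr hIconn
  refine Convex.is_const_of_fderivWithin_eq_zero (𝕜 := ℝ) hconv
    (fun s hs => ((hf s hs).differentiableAt).differentiableWithinAt) (fun s hs => ?_) hx hy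
  have h1 : fderivWithin ℝ f I s = fderiv ℝ f s := fderivWithin_of_isOpen hIopen hs
  have h2 : deriv f s = 0 := (hf s hs).deriv
  rw [h1]
  ext
  simp [← toSpanSingleton_deriv, h2]

lemma keyalg (x p q r w A B c e1 e2 : ℝ)
    (hE1 : e1 = 1 ∨ e1 = -1) (hE2 : e2 = 1 ∨ e2 = -1)
    (h1 : x * q + p ^ 2 / 2 - e1 * e2 * x ^ 4 / 2 = A)
    (h2 : x * p ^ 2 - 2 * A * x - e1 * e2 * x ^ 5 / 5 = B)
    (h3 : -(10 * (e1 * e2)) * (p * q) - 5 * (e1 * e2) * (x * r) + 10 * (x ^ 3 * p) = 0)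
    (h4 : -(10 * (e1 * e2)) * (q * q + p * r) - 5 * (e1 * e2) * (p * r + x * w)
        + 10 * (3 * x ^ 2 * p ^ 2 + x ^ 3 * q) = 0)
    (h5 : (e2 * w - 15 * e1 * (x * p ^ 2) - 10 * e1 * (x ^ 2 * q) + e2 * x ^ 5)
        + c * e1 * (e2 * q - e1 * x ^ 3) + c * e1 * (-(e1 * e2) * x ^ 2 * (e2 * x)) = 0) :
    -(126/25) * x ^ 10 - (8/5) * c * e2 * x ^ 8 - (126/5) * (e1 * e2) * A * x ^ 6
      - (42/5) * (e1 * e2) * B * x ^ 5 - (1/2) * c * e1 * B * x ^ 3 - 6 * A * B * x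
      - (7/2) * B ^ 2 = 0 := by
  rcases hE1 with rfl | rfl <;> rcases hE2 with rfl | rfl
  · linear_combination (-(1:ℝ)*(-(38/5)*x^5 + c*x^3 + 12*A*x + 7*B - 2*x^2*q)*x) * h1 + ((-(38/5)*x^5 + c*x^3 + 12*A*x + 7*B - 2*x^2*q)/2 - (6*x^2*q - 15*x^5)) * h2 + (-(3/5)*x^3*p) * h3 + ((1/5)*x^4) * h4 + (x^5) * h5
  · linear_combination (-(1:ℝ)*((38/5)*x^5 + c*x^3 + 12*A*x + 7*B - 2*x^2*q)*x) * h1 + (((38/5)*x^5 + c*x^3 + 12*A*x + 7*B - 2*x^2*q)/2 - (6*x^2*q + 15*x^5)) * h2 + ((3/5)*x^3*p) * h3 + (-(1/5)*x^4) * h4 + (-(1:ℝ)*x^5) * h5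
  · linear_combination (-(1:ℝ)*((38/5)*x^5 - c*x^3 + 12*A*x + 7*B - 2*x^2*q)*x) * h1 + (((38/5)*x^5 - c*x^3 + 12*A*x + 7*B - 2*x^2*q)/2 - (6*x^2*q + 15*x^5)) * h2 + ((3/5)*x^3*p) * h3 + (-(1/5)*x^4) * h4 + (x^5) * h5
  · linear_combination (-(1:ℝ)*(-(38/5)*x^5 - c*x^3 + 12*A*x + 7*B - 2*x^2*q)*x) * h1 + ((-(38/5)*x^5 - c*x^3 + 12*A*x + 7*B - 2*x^2*q)/2 - (6*x^2*q - 15*x^5)) * h2 + (-(3/5)*x^3*p) * h3 + ((1/5)*x^4) * h4 + (-(1:ℝ)*x^5) * h5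

/-- A triharmonic `2`-Frenet curve in the de Sitter space form `S^m_t(c)`
(`c > 0`) has constant curvature function `k`. -/
theorem stmt_3 (m t : ℕ) (hm : 2 ≤ m) (ht1 : 1 ≤ t) (ht2 : t ≤ m - 1)
    (c : ℝ) (hc : 0 < c)
    (I : Set ℝ) (hIopen : IsOpen I) (hIconn : I.OrdConnected)
    (γ N : ℝ → Fin (m+1) → ℝ) (k : ℝ → ℝ)
    (hγ : ContDiffOn ℝ (⊤ : ℕ∞) γ I) (hN : ContDiffOn ℝ (⊤ : ℕ∞) N I) (hk : ContDiffOn ℝ (⊤ : ℕ∞) k I)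
    (hkpos : ∀ s ∈ I, 0 < k s)
    (ε₁ ε₂ : ℝ) (hε₁ : ε₁ = 1 ∨ ε₁ = -1) (hε₂ : ε₂ = 1 ∨ ε₂ = -1)
    (hquad : ∀ s ∈ I, pform t (γ s) (γ s) = 1 / c)
    (hunit : ∀ s ∈ I, pform t (deriv γ s) (deriv γ s) = ε₁)
    (hNtan : ∀ s ∈ I, pform t (N s) (γ s) = 0)
    (hNN : ∀ s ∈ I, pform t (N s) (N s) = ε₂)
    (hTN : ∀ s ∈ I, pform t (deriv γ s) (N s) = 0)
    (hFr1 : ∀ s ∈ I, cov t c γ (deriv γ) s = (ε₂ * k s) • N s)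
    (hFr2 : ∀ s ∈ I, cov t c γ N s = (-(ε₁ * k s)) • deriv γ s)
    (htri : ∀ s ∈ I, tensionField t c 3 γ s = 0) :
    ∀ s₁ ∈ I, ∀ s₂ ∈ I, k s₁ = k s₂ := by
  intro s₁ hs₁ s₂ hs₂
  by_contra hne
  have he1sq : ε₁ * ε₁ = 1 := by rcases hε₁ with h | h <;> rw [h] <;> norm_num
  have he2sq : ε₂ * ε₂ = 1 := by rcases hε₂ with h | h <;> rw [h] <;> norm_num
  have heesq : (ε₁ * ε₂) * (ε₁ * ε₂) = 1 := by
    rw [show (ε₁ * ε₂) * (ε₁ * ε₂) = (ε₁ * ε₁) * (ε₂ * ε₂) from by ring, he1sq, he2sq]; norm_num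
  have he1ne : ε₁ ≠ 0 := by rcases hε₁ with h | h <;> rw [h] <;> norm_num
  have he2ne : ε₂ ≠ 0 := by rcases hε₂ with h | h <;> rw [h] <;> norm_num
  have memI : ∀ {s : ℝ}, s ∈ I → I ∈ nhds s := fun hs => hIopen.mem_nhds hs
  set T := deriv γ with hTdef
  set k1 := deriv k with hk1def
  set k2 := deriv k1 with hk2def
  set k3 := deriv k2 with hk3def
  set k4 := deriv k3 with hk4def
  have hTsm : ContDiffOn ℝ (⊤ : ℕ∞) T I := contDiffOn_deriv_top hIopen hγ
  have hk1sm : ContDiffOn ℝ (⊤ : ℕ∞) k1 I := contDiffOn_deriv_top hIopen hk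
  have hk2sm : ContDiffOn ℝ (⊤ : ℕ∞) k2 I := contDiffOn_deriv_top hIopen hk1sm
  have hk3sm : ContDiffOn ℝ (⊤ : ℕ∞) k3 I := contDiffOn_deriv_top hIopen hk2sm
  have hγd : ∀ s ∈ I, HasDerivAt γ (T s) s := fun s hs => hasDerivAt_of_contDiffOn hIopen hγ hs
  have hTd : ∀ s ∈ I, HasDerivAt T (deriv T s) s :=
    fun s hs => hasDerivAt_of_contDiffOn hIopen hTsm hs
  have hNd : ∀ s ∈ I, HasDerivAt N (deriv N s) s :=
    fun s hs => hasDerivAt_of_contDiffOn hIopen hN hs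
  have hkd : ∀ s ∈ I, HasDerivAt k (k1 s) s := fun s hs => hasDerivAt_of_contDiffOn hIopen hk hs
  have hk1d : ∀ s ∈ I, HasDerivAt k1 (k2 s) s :=
    fun s hs => hasDerivAt_of_contDiffOn hIopen hk1sm hs
  have hk2d : ∀ s ∈ I, HasDerivAt k2 (k3 s) s :=
    fun s hs => hasDerivAt_of_contDiffOn hIopen hk2sm hs
  have hk3d : ∀ s ∈ I, HasDerivAt k3 (k4 s) s :=
    fun s hs => hasDerivAt_of_contDiffOn hIopen hk3sm hs
  have derEq : ∀ (f g : ℝ → ℝ) {d₁ d₂ : ℝ} {s : ℝ}, s ∈ I →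
      (∀ y ∈ I, f y = g y) → HasDerivAt f d₁ s → HasDerivAt g d₂ s → d₁ = d₂ := by
    intro f g d₁ d₂ s hs hfg hf hg
    have : HasDerivAt g d₁ s := hf.congr_of_eventuallyEq
      (Filter.eventuallyEq_of_mem (memI hs) fun y hy => (hfg y hy).symm)
    exact this.unique hg
  -- ⟪T,γ⟫ = 0
  have hTγ : ∀ s ∈ I, pform t (T s) (γ s) = 0 := by
    intro s hs
    have h := derEq (fun y => pform t (γ y) (γ y)) (fun _ => 1 / c) hs (fun y hy => hquad y hy)
      (hasDerivAt_pform (hγd s hs) (hγd s hs)) (hasDerivAt_const s _)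
    rw [pform_comm (γ s) (T s)] at h
    linarith
  have hNT : ∀ s ∈ I, pform t (N s) (T s) = 0 := by
    intro s hs; rw [pform_comm]; exact hTN s hs
  -- derivative of N
  have hNγd0 : ∀ s ∈ I, pform t (deriv N s) (γ s) = 0 := by
    intro s hs
    have h := derEq (fun y => pform t (N y) (γ y)) (fun _ => 0) hs (fun y hy => hNtan y hy)
      (hasDerivAt_pform (hNd s hs) (hγd s hs)) (hasDerivAt_const s _)
    rw [hNT s hs] at h
    linarith
  have hN' : ∀ s ∈ I, HasDerivAt N ((-(ε₁ * k s)) • T s) s := by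
    intro s hs
    have h0 := hFr2 s hs
    unfold cov at h0
    rw [hNγd0 s hs] at h0
    have h1 : deriv N s = (-(ε₁ * k s)) • T s := by rw [← h0]; module
    have h2 := hNd s hs
    rwa [h1] at h2
  -- derivative of T
  have hdTγ : ∀ s ∈ I, pform t (deriv T s) (γ s) = -ε₁ := by
    intro s hs
    have h := derEq (fun y => pform t (T y) (γ y)) (fun _ => 0) hs (fun y hy => hTγ y hy)
      (hasDerivAt_pform (hTd s hs) (hγd s hs)) (hasDerivAt_const s _)
    rw [hunit s hs] at h
    linarith
  have hT' : ∀ s ∈ I, HasDerivAt T ((ε₂ * k s) • N s - (c * ε₁) • γ s) s := by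
    intro s hs
    have h0 := hFr1 s hs
    unfold cov at h0
    rw [hdTγ s hs] at h0
    have h1 : deriv T s = (ε₂ * k s) • N s - (c * ε₁) • γ s := by rw [← h0]; module
    have h2 := hTd s hs
    rwa [h1] at h2
  -- the covariant-derivative step
  have step : ∀ (X : ℝ → Fin (m+1) → ℝ) (a b a' b' : ℝ → ℝ),
      (∀ s ∈ I, X s = a s • T s + b s • N s) →
      (∀ s ∈ I, HasDerivAt a (a' s) s) →
      (∀ s ∈ I, HasDerivAt b (b' s) s) →
      ∀ s ∈ I, cov t c γ X s
        = (a' s - ε₁ * k s * b s) • T s + (b' s + ε₂ * k s * a s) • N s := by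
    intro X a b a' b' hX ha hb s hs
    have hYd : HasDerivAt (fun y => a y • T y + b y • N y)
        ((a s • ((ε₂ * k s) • N s - (c * ε₁) • γ s) + a' s • T s) +
          (b s • ((-(ε₁ * k s)) • T s) + b' s • N s)) s :=
      ((ha s hs).smul (hT' s hs)).add ((hb s hs).smul (hN' s hs))
    have hXd := hYd.congr_of_eventuallyEq
      (Filter.eventuallyEq_of_mem (memI hs) fun y hy => hX y hy)
    have hder := hXd.deriv
    have hp : pform t (deriv X s) (γ s) = -(a s * ε₁) := by
      rw [hder]
      simp only [pform_add_left, pform_sub_left, pform_smul_left]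
      rw [hTγ s hs, hNtan s hs, hquad s hs]
      field_simp
      ring
    unfold cov
    rw [hp, hder]
    module
  -- iterated covariant derivatives of T
  have hit1 : ∀ s ∈ I, (cov t c γ)^[1] T s
      = (fun _ => (0:ℝ)) s • T s + (fun y => ε₂ * k y) s • N s := by
    intro s hs
    rw [Function.iterate_one, hFr1 s hs]
    module
  have hit2 : ∀ s ∈ I, (cov t c γ)^[2] T s
      = (fun y => -(ε₁ * ε₂) * (k y * k y)) s • T s + (fun y => ε₂ * k1 y) s • N s := by
    intro s hs
    rw [show (cov t c γ)^[2] T = cov t c γ ((cov t c γ)^[1] T) from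
      Function.iterate_succ_apply' (cov t c γ) 1 T,
      step _ (fun _ => (0:ℝ)) (fun y => ε₂ * k y) (fun _ => (0:ℝ)) (fun y => ε₂ * k1 y) hit1
        (fun s hs => hasDerivAt_const s 0) (fun s hs => (hkd s hs).const_mul ε₂) s hs]
    match_scalars
    · ring
    · ring
  have hit3 : ∀ s ∈ I, (cov t c γ)^[3] T s
      = (fun y => -(3*(ε₁ * ε₂)) * (k y * k1 y)) s • T s
        + (fun y => ε₂ * k2 y - ε₁ * (k y * k y * k y)) s • N s := by
    intro s hs
    rw [show (cov t c γ)^[3] T = cov t c γ ((cov t c γ)^[2] T) from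
      Function.iterate_succ_apply' (cov t c γ) 2 T,
      step _ (fun y => -(ε₁ * ε₂) * (k y * k y)) (fun y => ε₂ * k1 y)
        (fun y => -(ε₁ * ε₂) * (k1 y * k y + k y * k1 y)) (fun y => ε₂ * k2 y) hit2
        (fun s hs => ((hkd s hs).mul (hkd s hs)).const_mul (-(ε₁ * ε₂)))
        (fun s hs => (hk1d s hs).const_mul ε₂) s hs]
    match_scalars
    · ring
    · linear_combination (-(ε₁ * (k s * k s * k s))) * he2sq
  have hit4 : ∀ s ∈ I, (cov t c γ)^[4] T s
      = (fun y => -(3*(ε₁ * ε₂)) * (k1 y * k1 y) - 4*(ε₁ * ε₂) * (k y * k2 y)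
            + k y * k y * k y * k y) s • T s
        + (fun y => ε₂ * k3 y - 6*ε₁ * (k y * k y * k1 y)) s • N s := by
    intro s hs
    rw [show (cov t c γ)^[4] T = cov t c γ ((cov t c γ)^[3] T) from
      Function.iterate_succ_apply' (cov t c γ) 3 T,
      step _ (fun y => -(3*(ε₁ * ε₂)) * (k y * k1 y))
        (fun y => ε₂ * k2 y - ε₁ * (k y * k y * k y))
        (fun y => -(3*(ε₁ * ε₂)) * (k1 y * k1 y + k y * k2 y))
        (fun y => ε₂ * k3 y - ε₁ * ((k1 y * k y + k y * k1 y) * k y + k y * k y * k1 y)) hit3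
        (fun s hs => ((hkd s hs).mul (hk1d s hs)).const_mul (-(3*(ε₁ * ε₂))))
        (fun s hs => ((hk2d s hs).const_mul ε₂).sub
          ((((hkd s hs).mul (hkd s hs)).mul (hkd s hs)).const_mul ε₁)) s hs]
    match_scalars
    · linear_combination (k s * k s * k s * k s) * he1sq
    · linear_combination (-(3 * ε₁ * (k s * k s * k1 s))) * he2sq
  have hit5 : ∀ s ∈ I, (cov t c γ)^[5] T s
      = (fun y => -(10*(ε₁ * ε₂)) * (k1 y * k2 y) - 5*(ε₁ * ε₂) * (k y * k3 y)
            + 10*(k y * k y * k y * k1 y)) s • T s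
        + (fun y => ε₂ * k4 y - 15*ε₁ * (k y * k1 y * k1 y) - 10*ε₁ * (k y * k y * k2 y)
            + ε₂ * (k y * k y * k y * k y * k y)) s • N s := by
    intro s hs
    rw [show (cov t c γ)^[5] T = cov t c γ ((cov t c γ)^[4] T) from
      Function.iterate_succ_apply' (cov t c γ) 4 T,
      step _ (fun y => -(3*(ε₁ * ε₂)) * (k1 y * k1 y) - 4*(ε₁ * ε₂) * (k y * k2 y)
            + k y * k y * k y * k y)
        (fun y => ε₂ * k3 y - 6*ε₁ * (k y * k y * k1 y))
        (fun y => (-(3*(ε₁ * ε₂)) * (k2 y * k1 y + k1 y * k2 y)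
            - 4*(ε₁ * ε₂) * (k1 y * k2 y + k y * k3 y))
            + (((k1 y * k y + k y * k1 y) * k y + k y * k y * k1 y) * k y
              + k y * k y * k y * k1 y))
        (fun y => ε₂ * k4 y - 6*ε₁ * ((k1 y * k y + k y * k1 y) * k1 y + k y * k y * k2 y)) hit4
        (fun s hs => ((((hk1d s hs).mul (hk1d s hs)).const_mul (-(3*(ε₁ * ε₂)))).sub
            (((hkd s hs).mul (hk2d s hs)).const_mul (4*(ε₁ * ε₂)))).add
          ((((hkd s hs).mul (hkd s hs)).mul (hkd s hs)).mul (hkd s hs)))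
        (fun s hs => ((hk3d s hs).const_mul ε₂).sub
          ((((hkd s hs).mul (hkd s hs)).mul (hk1d s hs)).const_mul (6*ε₁))) s hs]
    match_scalars
    · linear_combination (6*(k s * k s * k s * k1 s)) * he1sq
    · linear_combination (-(3*ε₁*(k s * k1 s * k1 s) + 4*ε₁*(k s * k s * k2 s))) * he2sq
  -- the two scalar equations
  have hEq1 : ∀ s ∈ I, -(10*(ε₁ * ε₂)) * (k1 s * k2 s) - 5*(ε₁ * ε₂) * (k s * k3 s)
      + 10*(k s * k s * k s * k1 s) = 0 := by
    intro s hs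
    have h := htri s hs
    unfold tensionField at h
    norm_num [Finset.sum_range_succ, Finset.sum_range_zero] at h
    rw [← hTdef] at h
    rw [show cov t c γ (cov t c γ (cov t c γ (cov t c γ (cov t c γ T)))) = (cov t c γ)^[5] T from rfl,
      show cov t c γ (cov t c γ (cov t c γ T)) = (cov t c γ)^[3] T from rfl,
      show cov t c γ (cov t c γ T) = (cov t c γ)^[2] T from rfl] at h
    rw [hit5 s hs, hit3 s hs, hit2 s hs, hFr1 s hs] at h
    unfold curvOp at h
    have hsc := congrArg (fun v => pform t v (T s)) h
    simp only [pform_add_left, pform_sub_left, pform_neg_left, pform_smul_left,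
      pform_zero_left] at hsc
    rw [hunit s hs, hNT s hs] at hsc
    linear_combination ε₁ * hsc - (-(10*(ε₁ * ε₂)) * (k1 s * k2 s)
      - 5*(ε₁ * ε₂) * (k s * k3 s) + 10*(k s * k s * k s * k1 s)) * he1sq
  have hEq2 : ∀ s ∈ I, (ε₂ * k4 s - 15*ε₁ * (k s * k1 s * k1 s) - 10*ε₁ * (k s * k s * k2 s)
      + ε₂ * (k s * k s * k s * k s * k s))
      + c * ε₁ * (ε₂ * k2 s - ε₁ * (k s * k s * k s))
      + c * ε₁ * (-(ε₁ * ε₂) * (k s * k s) * (ε₂ * k s)) = 0 := by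
    intro s hs
    have h := htri s hs
    unfold tensionField at h
    norm_num [Finset.sum_range_succ, Finset.sum_range_zero] at h
    rw [← hTdef] at h
    rw [show cov t c γ (cov t c γ (cov t c γ (cov t c γ (cov t c γ T)))) = (cov t c γ)^[5] T from rfl,
      show cov t c γ (cov t c γ (cov t c γ T)) = (cov t c γ)^[3] T from rfl,
      show cov t c γ (cov t c γ T) = (cov t c γ)^[2] T from rfl] at h
    rw [hit5 s hs, hit3 s hs, hit2 s hs, hFr1 s hs] at h
    unfold curvOp at h
    have hsc := congrArg (fun v => pform t v (N s)) h
    simp only [pform_add_left, pform_sub_left, pform_neg_left, pform_smul_left,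
      pform_zero_left] at hsc
    rw [hunit s hs, hNT s hs, hTN s hs, hNN s hs] at hsc
    linear_combination ε₂ * hsc - ((ε₂ * k4 s - 15*ε₁ * (k s * k1 s * k1 s)
      - 10*ε₁ * (k s * k s * k2 s) + ε₂ * (k s * k s * k s * k s * k s))
      + c * ε₁ * (ε₂ * k2 s - ε₁ * (k s * k s * k s))
      + c * ε₁ * (-(ε₁ * ε₂) * (k s * k s) * (ε₂ * k s))) * he2sq
  -- derivative of the first scalar equation
  have hEq1d : ∀ s ∈ I, -(10*(ε₁ * ε₂)) * (k2 s * k2 s + k1 s * k3 s)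
      - 5*(ε₁ * ε₂) * (k1 s * k3 s + k s * k4 s)
      + 10*(3*(k s * k s * k1 s * k1 s) + k s * k s * k s * k2 s) = 0 := by
    intro s hs
    have hd : HasDerivAt (fun y => -(10*(ε₁ * ε₂)) * (k1 y * k2 y)
        - 5*(ε₁ * ε₂) * (k y * k3 y) + 10*(k y * k y * k y * k1 y))
        (-(10*(ε₁ * ε₂)) * (k2 s * k2 s + k1 s * k3 s)
          - 5*(ε₁ * ε₂) * (k1 s * k3 s + k s * k4 s)
          + 10*(3*(k s * k s * k1 s * k1 s) + k s * k s * k s * k2 s)) s := by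
      refine hasDerivAt_fix (((((hk1d s hs).mul (hk2d s hs)).const_mul (-(10*(ε₁ * ε₂)))).sub
        (((hkd s hs).mul (hk3d s hs)).const_mul (5*(ε₁ * ε₂)))).add
        (((((hkd s hs).mul (hkd s hs)).mul (hkd s hs)).mul (hk1d s hs)).const_mul 10)) (by simp only [Pi.mul_apply]; ring)
    exact derEq _ (fun _ => (0:ℝ)) hs (fun y hy => hEq1 y hy) hd (hasDerivAt_const s _)
  -- first integral A
  have hF0 : ∀ s ∈ I, HasDerivAt (fun y => k y * k2 y + (k1 y * k1 y)/2
      - (ε₁ * ε₂) * (k y * k y * k y * k y)/2) 0 s := by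
    intro s hs
    have hd : HasDerivAt (fun y => k y * k2 y + (k1 y * k1 y)/2
        - (ε₁ * ε₂) * (k y * k y * k y * k y)/2)
        (k1 s * k2 s + k s * k3 s + k1 s * k2 s - (ε₁ * ε₂) * (2*(k s * k s * k s * k1 s))) s := by
      refine hasDerivAt_fix ((((hkd s hs).mul (hk2d s hs)).add
        (((hk1d s hs).mul (hk1d s hs)).div_const 2)).sub
        (((((((hkd s hs).mul (hkd s hs)).mul (hkd s hs)).mul (hkd s hs))).const_mul
          (ε₁ * ε₂)).div_const 2)) (by simp only [Pi.mul_apply]; ring)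
    have hz : k1 s * k2 s + k s * k3 s + k1 s * k2 s
        - (ε₁ * ε₂) * (2*(k s * k s * k s * k1 s)) = 0 := by
      linear_combination (-(ε₁*ε₂)/5) * hEq1 s hs - (2*(k1 s * k2 s) + k s * k3 s) * heesq
    rwa [hz] at hd
  obtain ⟨A, hA⟩ : ∃ A, ∀ s ∈ I, k s * k2 s + (k1 s * k1 s)/2
      - (ε₁ * ε₂) * (k s * k s * k s * k s)/2 = A :=
    ⟨_, fun s hs => constOn hIopen hIconn _ hF0 hs hs₁⟩
  -- first integral B
  have hG0 : ∀ s ∈ I, HasDerivAt (fun y => k y * (k1 y * k1 y) - 2*A*k y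
      - (ε₁ * ε₂) * (k y * k y * k y * k y * k y)/5) 0 s := by
    intro s hs
    have hd : HasDerivAt (fun y => k y * (k1 y * k1 y) - 2*A*k y
        - (ε₁ * ε₂) * (k y * k y * k y * k y * k y)/5)
        (k1 s * (k1 s * k1 s) + k s * (k2 s * k1 s + k1 s * k2 s) - 2*A*k1 s
          - (ε₁ * ε₂) * (5*(k s * k s * k s * k s * k1 s))/5) s := by
      refine hasDerivAt_fix ((((hkd s hs).mul ((hk1d s hs).mul (hk1d s hs))).sub
        ((hkd s hs).const_mul (2*A))).sub
        ((((((((hkd s hs).mul (hkd s hs)).mul (hkd s hs)).mul (hkd s hs)).mul (hkd s hs))).const_mul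
          (ε₁ * ε₂)).div_const 5)) (by simp only [Pi.mul_apply]; ring)
    have hz : k1 s * (k1 s * k1 s) + k s * (k2 s * k1 s + k1 s * k2 s) - 2*A*k1 s
        - (ε₁ * ε₂) * (5*(k s * k s * k s * k s * k1 s))/5 = 0 := by
      linear_combination (2*k1 s) * (hA s hs)
    rwa [hz] at hd
  obtain ⟨B, hB⟩ : ∃ B, ∀ s ∈ I, k s * (k1 s * k1 s) - 2*A*k s
      - (ε₁ * ε₂) * (k s * k s * k s * k s * k s)/5 = B :=
    ⟨_, fun s hs => constOn hIopen hIconn _ hG0 hs hs₁⟩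
  -- the polynomial
  set P : Polynomial ℝ := Polynomial.C (-(126/25 : ℝ)) * Polynomial.X^10
    + Polynomial.C (-(8/5)*c*ε₂) * Polynomial.X^8
    + Polynomial.C (-(126/5)*(ε₁*ε₂)*A) * Polynomial.X^6
    + Polynomial.C (-(42/5)*(ε₁*ε₂)*B) * Polynomial.X^5
    + Polynomial.C (-(1/2)*c*ε₁*B) * Polynomial.X^3
    + Polynomial.C (-6*A*B) * Polynomial.X
    + Polynomial.C (-(7/2)*B^2) with hPdef
  have hPne : P ≠ 0 := by
    intro h0
    have hcoeff := congrArg (fun p => Polynomial.coeff p 10) h0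
    simp only [hPdef, Polynomial.coeff_add, Polynomial.coeff_C_mul, Polynomial.coeff_X_pow,
      Polynomial.coeff_C, Polynomial.coeff_X] at hcoeff
    norm_num at hcoeff
  have hroot : ∀ s ∈ I, P.IsRoot (k s) := by
    intro s hs
    have key := keyalg (k s) (k1 s) (k2 s) (k3 s) (k4 s) A B c ε₁ ε₂ hε₁ hε₂
      (by linear_combination hA s hs) (by linear_combination hB s hs)
      (by linear_combination hEq1 s hs) (by linear_combination hEq1d s hs)
      (by linear_combination hEq2 s hs)
    unfold Polynomial.IsRoot
    rw [hPdef]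
    simp only [Polynomial.eval_add, Polynomial.eval_mul, Polynomial.eval_pow,
      Polynomial.eval_C, Polynomial.eval_X]
    linear_combination key
  -- endgame via the intermediate value theorem
  have hIcc : Set.uIcc s₁ s₂ ⊆ I := hIconn.uIcc_subset hs₁ hs₂
  have hcont : ContinuousOn k (Set.uIcc s₁ s₂) := hk.continuousOn.mono hIcc
  have hsub : Set.uIcc (k s₁) (k s₂) ⊆ {x | P.IsRoot x} := by
    intro y hy
    obtain ⟨z, hz, hzy⟩ := intermediate_value_uIcc hcont hy
    exact hzy ▸ hroot z (hIcc hz)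
  have hinf : (Set.uIcc (k s₁) (k s₂)).Infinite := by
    rw [Set.uIcc]
    exact Set.Icc_infinite (min_lt_max.mpr hne)
  exact hinf ((Polynomial.finite_setOf_isRoot hPne).subset hsub)
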